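/- Let S be an integrable real-valued random variable on a probability space, let α ∈ (0,1), and let q be a real number with P(S ≤ q) = α. Then the function φ(z) = z + E[(S − z)^+]/(1 − α), defined for real z, satisfies φ(q) ≤ φ(z) for all real z; that is, q is a global minimizer of φ. -/

import Mathlib

/-!
Moving the threshold from `q` to `z` changes `(S - q)⁺` by at most `z - q`, and only where
`S > q`; so `E[(S - q)⁺] ≤ E[(S - z)⁺] + (z - q) P(S > q) = E[(S - z)⁺] + (z - q)(1 - α)`,
which after division by `1 - α` is `φ(q) ≤ φ(z)`.
-/

open MeasureTheory

lemma max_sub_zero_le_add_indicator (s q z : ℝ) :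
    max (s - q) 0 ≤ max (s - z) 0 + {x | q < x}.indicator (fun _ ↦ z - q) s := by
  have hz := le_max_left (s - z) 0
  by_cases h : q < s
  · rw [Set.indicator_of_mem (show s ∈ {x | q < x} from h)]
    exact max_le (by linarith) (by linarith)
  · rw [Set.indicator_of_notMem (show s ∉ {x | q < x} from h), add_zero]
    exact max_le (by linarith [le_max_right (s - z) 0]) (le_max_right _ _)

lemma integral_max_sub_zero_le {Ω : Type*} [MeasurableSpace Ω] {μ : Measure Ω}
    [IsFiniteMeasure μ] {S : Ω → ℝ} (hS : Integrable S μ) (q z : ℝ) :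
    ∫ ω, max (S ω - q) 0 ∂μ ≤ ∫ ω, max (S ω - z) 0 ∂μ + (z - q) * μ.real {ω | q < S ω} := by
  have hA : NullMeasurableSet {ω | q < S ω} μ :=
    aestronglyMeasurable_const.nullMeasurableSet_lt hS.1
  have hint : ∀ c : ℝ, Integrable (fun ω ↦ max (S ω - c) 0) μ :=
    fun c ↦ (hS.sub (integrable_const c)).pos_part
  have hind : Integrable ({ω | q < S ω}.indicator fun _ ↦ z - q) μ :=
    (integrable_const (z - q)).indicator₀ hA
  calc ∫ ω, max (S ω - q) 0 ∂μ
      ≤ ∫ ω, max (S ω - z) 0 + {ω | q < S ω}.indicator (fun _ ↦ z - q) ω ∂μ :=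
        integral_mono (hint q) ((hint z).add hind)
          fun ω ↦ max_sub_zero_le_add_indicator (S ω) q z
    _ = ∫ ω, max (S ω - z) 0 ∂μ + (z - q) * μ.real {ω | q < S ω} := by
        rw [integral_add (hint z) hind, integral_indicator₀ hA, setIntegral_const, smul_eq_mul,
          mul_comm]

lemma measureReal_lt_eq_one_sub {Ω : Type*} [MeasurableSpace Ω] {P : Measure Ω}
    [IsProbabilityMeasure P] {S : Ω → ℝ} (hS : AEStronglyMeasurable S P) {α q : ℝ}
    (hα : 0 ≤ α) (hq : P {ω | S ω ≤ q} = ENNReal.ofReal α) :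
    P.real {ω | q < S ω} = 1 - α := by
  have hle : NullMeasurableSet {ω | S ω ≤ q} P :=
    hS.nullMeasurableSet_le aestronglyMeasurable_const
  have hcompl : {ω | q < S ω} = {ω | S ω ≤ q}ᶜ := by ext ω; simp
  rw [hcompl, measureReal_compl₀ hle, probReal_univ, measureReal_def, hq,
    ENNReal.toReal_ofReal hα]

/-- the Rockafellar–Uryasev objective `φ(z) = z + E[(S−z)⁺]/(1−α)` is
globally minimized at any `q` with `P(S ≤ q) = α`. -/
theorem stmt_8 {Ω : Type*} [MeasurableSpace Ω] (P : Measure Ω)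
    [IsProbabilityMeasure P] (S : Ω → ℝ) (hS : Integrable S P)
    (α : ℝ) (hα : α ∈ Set.Ioo (0 : ℝ) 1)
    (q : ℝ) (hq : P {ω | S ω ≤ q} = ENNReal.ofReal α) :
    ∀ z : ℝ, q + (∫ ω, max (S ω - q) 0 ∂P) / (1 - α)
      ≤ z + (∫ ω, max (S ω - z) 0 ∂P) / (1 - α) := by
  intro z
  have h1α : 0 < 1 - α := sub_pos.2 hα.2
  have hshift := integral_max_sub_zero_le hS q z
  rw [measureReal_lt_eq_one_sub hS.1 hα.1.le hq] at hshift
  have hdiv := div_le_div_of_nonneg_right hshift h1α.le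
  rw [add_div, mul_div_cancel_right₀ _ h1α.ne'] at hdiv
  linarith
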